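/- arXiv:1811.01436 — 2 statements merged into one kernel-verified Lean document; each statement's English description precedes it below -/
import Mathlib

section
/- Fix θ > 0. If f, g ∈ F[0,T] satisfy Φ_θ(f) = Φ_θ(g), then Φ_θ(λf + (1−λ)g) = Φ_θ(f) for every λ ∈ [0,1]; that is, the equivalence classes of the relation f ∼_θ g ⇔ Φ_θ(f) = Φ_θ(g) are convex subsets of F[0,T]. -/
open Set Function Filter Classical

/-- The next SOD sampling time after time `s` for input `f`, threshold `θ`, on `[0,T]`:
the infimum of `{t ∈ (s,T] : |f t - f s| ≥ θ}` if this set is nonempty, `none` otherwise. -/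
noncomputable def sodNext (T θ : ℝ) (f : ℝ → ℝ) (s : ℝ) : Option ℝ :=
  if (∃ t ∈ Set.Ioc s T, θ ≤ |f t - f s|) then
    some (sInf {t | t ∈ Set.Ioc s T ∧ θ ≤ |f t - f s|})
  else none

/-- The `k`-th SOD sampling time (`t_0 = 0`), `none` if the recursion has stopped before `k`. -/
noncomputable def sodTime (T θ : ℝ) (f : ℝ → ℝ) : ℕ → Option ℝ
  | 0 => some 0
  | n + 1 => (sodTime T θ f n).bind (sodNext T θ f)

/-- The SOD output event sequence `Φ_θ(f)` : it takes the value `f t_k - f t_{k-1}` at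
each sampling time `t_k`, `k ≥ 1`, and `0` elsewhere. -/
noncomputable def sodOut (T θ : ℝ) (f : ℝ → ℝ) : ℝ → ℝ := fun t =>
  if h : ∃ k : ℕ, ∃ s : ℝ, sodTime T θ f k = some s ∧ sodNext T θ f s = some t
  then f t - f h.choose_spec.choose
  else 0

/-- Membership in `F[0,T]`: continuous on `[0,T]` with `f 0 = 0`. -/
def memF (T : ℝ) (f : ℝ → ℝ) : Prop :=
  ContinuousOn f (Set.Icc 0 T) ∧ f 0 = 0

/-- An event sequence on `[0,T]`: finitely supported with support in `[0,T]`. -/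
def IsEventSeq (T : ℝ) (η : ℝ → ℝ) : Prop :=
  (Function.support η).Finite ∧ Function.support η ⊆ Set.Icc 0 T

/-- `η` is `±1`-valued on its support. -/
def IsPM (η : ℝ → ℝ) : Prop :=
  ∀ t ∈ Function.support η, η t = 1 ∨ η t = -1

/-- Weyl's discrepancy norm `‖η‖_D = sup_{0 ≤ a ≤ b ≤ T} |Σ_{t ∈ [a,b]} η t|`. -/
noncomputable def discNorm (T : ℝ) (η : ℝ → ℝ) : ℝ :=
  sSup {x | ∃ a b : ℝ, 0 ≤ a ∧ a ≤ b ∧ b ≤ T ∧ x = |∑ᶠ t ∈ Set.Icc a b, η t|}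

/-- Alexiewicz norm `‖η‖_A = sup_{a ∈ [0,T]} |Σ_{t ∈ [0,a]} η t|`. -/
noncomputable def alexNorm (T : ℝ) (η : ℝ → ℝ) : ℝ :=
  sSup {x | ∃ a : ℝ, 0 ≤ a ∧ a ≤ T ∧ x = |∑ᶠ t ∈ Set.Icc 0 a, η t|}

/-- The values of `η` at consecutive support points alternate in sign. -/
def Alternating (η : ℝ → ℝ) : Prop :=
  ∀ s u : ℝ, s ∈ Function.support η → u ∈ Function.support η → s < u →
    (∀ t ∈ Function.support η, ¬ (s < t ∧ t < u)) → η s * η u < 0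

/-- One `(+−)`-transcription step: erase a `+1` followed (with no support in between) by a `−1`. -/
def StepPM (η η' : ℝ → ℝ) : Prop :=
  ∃ s u : ℝ, s < u ∧ η s = 1 ∧ η u = -1 ∧ (∀ t : ℝ, s < t → t < u → η t = 0) ∧
    η' = Function.update (Function.update η s 0) u 0

/-- One `(−+)`-transcription step: erase a `−1` followed (with no support in between) by a `+1`. -/
def StepMP (η η' : ℝ → ℝ) : Prop :=
  ∃ s u : ℝ, s < u ∧ η s = -1 ∧ η u = 1 ∧ (∀ t : ℝ, s < t → t < u → η t = 0) ∧
    η' = Function.update (Function.update η s 0) u 0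

/-- `StepsN R n x y` : `y` is obtained from `x` by `n` successive `R`-steps. -/
def StepsN (R : (ℝ → ℝ) → (ℝ → ℝ) → Prop) : ℕ → (ℝ → ℝ) → (ℝ → ℝ) → Prop
  | 0, x, y => x = y
  | n + 1, x, z => ∃ y, R x y ∧ StepsN R n y z

/-- Uniform distance `‖f − g‖_∞` over `[0,T]`. -/
noncomputable def unifDist (T : ℝ) (f g : ℝ → ℝ) : ℝ :=
  sSup {x | ∃ t ∈ Set.Icc 0 T, x = |f t - g t|}

/-!
Equal outputs force equal sampling times: after a sampling time `s`, the next one is the first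
point of the support of `Φ_θ(f)` beyond `s`. Summing the outputs, `f` and `g` also agree at the
sampling times. Between two consecutive sampling times `f` and `g` stay in the open `θ`-band
around their common value at the left endpoint, and that band is convex; at the right endpoint
they coincide. So every convex combination has the same sampling times and takes the same
values there, hence the same output.
-/

section SodNext

variable {T θ s : ℝ} {f : ℝ → ℝ}

lemma sodNext_eq_none_iff : sodNext T θ f s = none ↔ ∀ u ∈ Ioc s T, |f u - f s| < θ := by
  simp [sodNext]

lemma sodNext_eq_some_iff (hθ : 0 < θ) (hf : ContinuousOn f (Icc s T)) {t : ℝ} :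
    sodNext T θ f s = some t ↔ IsLeast {u | u ∈ Ioc s T ∧ θ ≤ |f u - f s|} t := by
  set S := {u | u ∈ Ioc s T ∧ θ ≤ |f u - f s|}
  have hS : S = Icc s T ∩ (fun u => |f u - f s|) ⁻¹' Ici θ := by
    ext u
    simp only [S, mem_ofPred_eq, mem_inter_iff, mem_preimage, mem_Ici, mem_Ioc, mem_Icc]
    constructor
    · rintro ⟨⟨hsu, huT⟩, hu⟩
      exact ⟨⟨hsu.le, huT⟩, hu⟩
    · rintro ⟨⟨hsu, huT⟩, hu⟩
      refine ⟨⟨hsu.lt_of_ne ?_, huT⟩, hu⟩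
      rintro rfl
      simp only [sub_self, abs_zero] at hu
      exact hu.not_gt hθ
  have hclosed : IsClosed S := hS ▸
    (hf.sub continuousOn_const).abs.preimage_isClosed_of_isClosed isClosed_Icc isClosed_Ici
  unfold sodNext
  split_ifs with hne
  · rw [Option.some_inj]
    exact ⟨fun h => h ▸ hclosed.isLeast_csInf hne ⟨s, fun u hu => hu.1.1.le⟩,
      fun h => h.csInf_eq⟩
  · simp only [false_iff]
    exact fun h => hne ⟨t, h.1⟩

end SodNext

section SodTime

variable {T θ : ℝ} {f : ℝ → ℝ}

lemma sodTime_succ_eq_some_iff {k : ℕ} {t : ℝ} :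
    sodTime T θ f (k + 1) = some t ↔ ∃ s, sodTime T θ f k = some s ∧ sodNext T θ f s = some t := by
  simp [sodTime, Option.bind_eq_some_iff]

lemma exists_sodTime_of_le {j k : ℕ} {t : ℝ} (hjk : j ≤ k) (hk : sodTime T θ f k = some t) :
    ∃ s, sodTime T θ f j = some s := by
  induction hjk generalizing t with
  | refl => exact ⟨t, hk⟩
  | step _ ih =>
    obtain ⟨s, hs, -⟩ := sodTime_succ_eq_some_iff.1 hk
    exact ih hs

lemma sodTime_nonneg (hθ : 0 < θ) (hf : ContinuousOn f (Icc 0 T)) {k : ℕ} {s : ℝ}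
    (hk : sodTime T θ f k = some s) : 0 ≤ s := by
  induction k generalizing s with
  | zero => exact (Option.some_inj.1 hk).le
  | succ k ih =>
    obtain ⟨p, hp, hn⟩ := sodTime_succ_eq_some_iff.1 hk
    have hp0 := ih hp
    exact hp0.trans ((sodNext_eq_some_iff hθ (hf.mono (Icc_subset_Icc_left hp0))).1 hn).1.1.1.le

lemma sodNext_isLeast (hθ : 0 < θ) (hf : ContinuousOn f (Icc 0 T)) {k : ℕ} {s t : ℝ}
    (hk : sodTime T θ f k = some s) (hn : sodNext T θ f s = some t) :
    IsLeast {u | u ∈ Ioc s T ∧ θ ≤ |f u - f s|} t :=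
  (sodNext_eq_some_iff hθ (hf.mono (Icc_subset_Icc_left (sodTime_nonneg hθ hf hk)))).1 hn

lemma sodTime_lt_of_lt (hθ : 0 < θ) (hf : ContinuousOn f (Icc 0 T)) {j k : ℕ} {a b : ℝ}
    (hjk : j < k) (hj : sodTime T θ f j = some a) (hk : sodTime T θ f k = some b) : a < b := by
  induction hjk generalizing b with
  | refl =>
    obtain ⟨p, hp, hn⟩ := sodTime_succ_eq_some_iff.1 hk
    obtain rfl : p = a := Option.some_inj.1 (hp.symm.trans hj)
    exact (sodNext_isLeast hθ hf hp hn).1.1.1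
  | step _ ih =>
    obtain ⟨p, hp, hn⟩ := sodTime_succ_eq_some_iff.1 hk
    exact (ih hp).trans (sodNext_isLeast hθ hf hp hn).1.1.1

lemma sodTime_le_of_le (hθ : 0 < θ) (hf : ContinuousOn f (Icc 0 T)) {j k : ℕ} {a b : ℝ}
    (hjk : j ≤ k) (hj : sodTime T θ f j = some a) (hk : sodTime T θ f k = some b) : a ≤ b := by
  rcases hjk.lt_or_eq with hjk | rfl
  · exact (sodTime_lt_of_lt hθ hf hjk hj hk).le
  · exact (Option.some_inj.1 (hj.symm.trans hk)).le

lemma eq_of_sodTime_eq_some (hθ : 0 < θ) (hf : ContinuousOn f (Icc 0 T)) {j k : ℕ} {a : ℝ}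
    (hj : sodTime T θ f j = some a) (hk : sodTime T θ f k = some a) : j = k := by
  rcases lt_trichotomy j k with hjk | rfl | hkj
  · exact absurd (sodTime_lt_of_lt hθ hf hjk hj hk) (lt_irrefl a)
  · rfl
  · exact absurd (sodTime_lt_of_lt hθ hf hkj hk hj) (lt_irrefl a)

lemma eq_of_sodNext_eq_some (hθ : 0 < θ) (hf : ContinuousOn f (Icc 0 T)) {j k : ℕ}
    {a b t : ℝ} (hj : sodTime T θ f j = some a) (ha : sodNext T θ f a = some t)
    (hk : sodTime T θ f k = some b) (hb : sodNext T θ f b = some t) : a = b := by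
  obtain rfl : j = k := Nat.succ_injective <| eq_of_sodTime_eq_some hθ hf
    (sodTime_succ_eq_some_iff.2 ⟨a, hj, ha⟩) (sodTime_succ_eq_some_iff.2 ⟨b, hk, hb⟩)
  exact Option.some_inj.1 (hj.symm.trans hk)

end SodTime

section SodOut

variable {T θ : ℝ} {f g : ℝ → ℝ}

lemma sodOut_eq_sub (hθ : 0 < θ) (hf : ContinuousOn f (Icc 0 T)) {k : ℕ} {s t : ℝ}
    (hk : sodTime T θ f k = some s) (hk₁ : sodTime T θ f (k + 1) = some t) :
    sodOut T θ f t = f t - f s := by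
  obtain ⟨p, hp, hn⟩ := sodTime_succ_eq_some_iff.1 hk₁
  obtain rfl : p = s := Option.some_inj.1 (hp.symm.trans hk)
  have hex : ∃ k s, sodTime T θ f k = some s ∧ sodNext T θ f s = some t := ⟨k, p, hp, hn⟩
  obtain ⟨hj, hjn⟩ := hex.choose_spec.choose_spec
  rw [sodOut, dif_pos hex, eq_of_sodNext_eq_some hθ hf hj hjn hp hn]

lemma sodOut_eq_zero {t : ℝ} (ht : ∀ k, sodTime T θ f (k + 1) ≠ some t) :
    sodOut T θ f t = 0 := by
  rw [sodOut, dif_neg]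
  rintro ⟨k, s, hk, hn⟩
  exact ht k (sodTime_succ_eq_some_iff.2 ⟨s, hk, hn⟩)

lemma exists_sodNext_le_of_sodOut_ne_zero (hθ : 0 < θ) (hf : ContinuousOn f (Icc 0 T))
    {k : ℕ} {s u : ℝ} (hk : sodTime T θ f k = some s) (hsu : s < u) (hu : sodOut T θ f u ≠ 0) :
    ∃ t, sodNext T θ f s = some t ∧ t ≤ u := by
  obtain ⟨j, hj⟩ : ∃ j, sodTime T θ f (j + 1) = some u := by
    by_contra! h
    exact hu (sodOut_eq_zero h)
  have hkj : k + 1 ≤ j + 1 := by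
    by_contra! hjk
    exact hsu.not_ge (sodTime_le_of_le hθ hf (by omega) hj hk)
  obtain ⟨t, ht⟩ := exists_sodTime_of_le hkj hj
  obtain ⟨p, hp, hn⟩ := sodTime_succ_eq_some_iff.1 ht
  obtain rfl : p = s := Option.some_inj.1 (hp.symm.trans hk)
  exact ⟨t, hn, sodTime_le_of_le hθ hf hkj ht hj⟩

lemma sodNext_eq_some_iff_isLeast_support (hθ : 0 < θ) (hf : ContinuousOn f (Icc 0 T))
    {k : ℕ} {s t : ℝ} (hk : sodTime T θ f k = some s) :
    sodNext T θ f s = some t ↔ IsLeast {u | s < u ∧ sodOut T θ f u ≠ 0} t := by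
  have hleast : ∀ t, sodNext T θ f s = some t → IsLeast {u | s < u ∧ sodOut T θ f u ≠ 0} t := by
    intro t hn
    obtain ⟨⟨hst, -⟩, hcross⟩ := (sodNext_isLeast hθ hf hk hn).1
    refine ⟨⟨hst, ?_⟩, fun u ⟨hsu, hu⟩ => ?_⟩
    · rw [sodOut_eq_sub hθ hf hk (sodTime_succ_eq_some_iff.2 ⟨s, hk, hn⟩)]
      intro h0
      rw [h0, abs_zero] at hcross
      exact hcross.not_gt hθ
    · obtain ⟨t', hn', ht'u⟩ := exists_sodNext_le_of_sodOut_ne_zero hθ hf hk hsu hu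
      obtain rfl : t = t' := Option.some_inj.1 (hn.symm.trans hn')
      exact ht'u
  refine ⟨hleast t, fun ht => ?_⟩
  obtain ⟨t', hn, -⟩ := exists_sodNext_le_of_sodOut_ne_zero hθ hf hk ht.1.1 ht.1.2
  rw [hn, (hleast t' hn).unique ht]

lemma sodOut_congr (hθ : 0 < θ) (hf : ContinuousOn f (Icc 0 T))
    (hg : ContinuousOn g (Icc 0 T)) (htime : ∀ k, sodTime T θ f k = sodTime T θ g k)
    (hval : ∀ k s, sodTime T θ f k = some s → f s = g s) : sodOut T θ f = sodOut T θ g := by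
  funext t
  by_cases ht : ∃ k, sodTime T θ f (k + 1) = some t
  · obtain ⟨k, hk₁⟩ := ht
    obtain ⟨s, hk⟩ := exists_sodTime_of_le k.le_succ hk₁
    rw [sodOut_eq_sub hθ hf hk hk₁, sodOut_eq_sub hθ hg (htime k ▸ hk) (htime (k + 1) ▸ hk₁),
      hval k s hk, hval (k + 1) t hk₁]
  · simp only [not_exists] at ht
    rw [sodOut_eq_zero ht, sodOut_eq_zero fun k => htime (k + 1) ▸ ht k]

lemma sodNext_eq_of_sodOut_eq (hθ : 0 < θ) (hf : ContinuousOn f (Icc 0 T))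
    (hg : ContinuousOn g (Icc 0 T)) (h : sodOut T θ f = sodOut T θ g) {j k : ℕ} {s : ℝ}
    (hj : sodTime T θ f j = some s) (hk : sodTime T θ g k = some s) :
    sodNext T θ f s = sodNext T θ g s :=
  Option.ext fun _ => (sodNext_eq_some_iff_isLeast_support hθ hf hj).trans <|
    h ▸ (sodNext_eq_some_iff_isLeast_support hθ hg hk).symm

lemma sodTime_eq_of_sodOut_eq (hθ : 0 < θ) (hf : memF T f) (hg : memF T g)
    (h : sodOut T θ f = sodOut T θ g) :
    ∀ k, sodTime T θ f k = sodTime T θ g k ∧ ∀ s, sodTime T θ f k = some s → f s = g s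
  | 0 => ⟨rfl, fun s hs => by rw [← Option.some_inj.1 hs, hf.2, hg.2]⟩
  | k + 1 => by
    obtain ⟨htime, hval⟩ := sodTime_eq_of_sodOut_eq hθ hf hg h k
    cases hk : sodTime T θ f k with
    | none => simp [sodTime, hk, ← htime]
    | some s =>
      have hkg : sodTime T θ g k = some s := htime ▸ hk
      have htime₁ : sodTime T θ f (k + 1) = sodTime T θ g (k + 1) := by
        simp only [sodTime, hk, hkg, Option.bind_some,
          sodNext_eq_of_sodOut_eq hθ hf.1 hg.1 h hk hkg]
      refine ⟨htime₁, fun t ht => ?_⟩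
      have hout := congrFun h t
      rw [sodOut_eq_sub hθ hf.1 hk ht, sodOut_eq_sub hθ hg.1 hkg (htime₁ ▸ ht), hval s hk] at hout
      linarith

end SodOut

section ConvexCombination

variable {T θ lam : ℝ} {f g : ℝ → ℝ}

lemma abs_convex_combination_lt {a b r : ℝ} (hl : lam ∈ Icc (0 : ℝ) 1) (ha : |a| < r)
    (hb : |b| < r) : |lam * a + (1 - lam) * b| < r := by
  simpa using convex_ball (0 : ℝ) r (mem_ball_zero_iff.2 ha) (mem_ball_zero_iff.2 hb) hl.1
    (sub_nonneg.2 hl.2) (add_sub_cancel lam 1)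

lemma sodNext_convex_combination (hθ : 0 < θ) {s : ℝ} (hf : ContinuousOn f (Icc s T))
    (hg : ContinuousOn g (Icc s T)) (hl : lam ∈ Icc (0 : ℝ) 1)
    (hnext : sodNext T θ f s = sodNext T θ g s) (hs : f s = g s)
    (ht : ∀ t, sodNext T θ f s = some t → f t = g t) :
    sodNext T θ (fun u => lam * f u + (1 - lam) * g u) s = sodNext T θ f s := by
  have hband : ∀ u, |f u - f s| < θ → |g u - g s| < θ →
      |(lam * f u + (1 - lam) * g u) - (lam * f s + (1 - lam) * g s)| < θ := fun u hfu hgu => by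
    convert abs_convex_combination_lt hl hfu hgu using 2
    ring
  cases hn : sodNext T θ f s with
  | none =>
    have hgn := sodNext_eq_none_iff.1 (hnext ▸ hn)
    rw [sodNext_eq_none_iff] at hn ⊢
    exact fun u hu => hband u (hn u hu) (hgn u hu)
  | some t =>
    have hcont : ContinuousOn (fun u => lam * f u + (1 - lam) * g u) (Icc s T) := by fun_prop
    obtain ⟨⟨htI, hft⟩, hfmin⟩ := (sodNext_eq_some_iff hθ hf).1 hn
    have hgmin := ((sodNext_eq_some_iff hθ hg).1 (hnext ▸ hn)).2
    rw [sodNext_eq_some_iff hθ hcont]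
    refine ⟨⟨htI, ?_⟩, fun u ⟨huI, hcu⟩ => ?_⟩
    · convert hft using 2
      rw [← ht t hn, ← hs]
      ring
    · by_contra! hut
      have hfu : |f u - f s| < θ := lt_of_not_ge fun h => hut.not_ge (hfmin ⟨huI, h⟩)
      have hgu : |g u - g s| < θ := lt_of_not_ge fun h => hut.not_ge (hgmin ⟨huI, h⟩)
      exact (hband u hfu hgu).not_ge hcu

lemma sodTime_convex_combination (hθ : 0 < θ) (hf : memF T f) (hg : memF T g)
    (h : sodOut T θ f = sodOut T θ g) (hl : lam ∈ Icc (0 : ℝ) 1) :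
    ∀ k, sodTime T θ (fun u => lam * f u + (1 - lam) * g u) k = sodTime T θ f k
  | 0 => rfl
  | k + 1 => by
    have ih := sodTime_convex_combination hθ hf hg h hl k
    obtain ⟨htime, hval⟩ := sodTime_eq_of_sodOut_eq hθ hf hg h k
    cases hk : sodTime T θ f k with
    | none => simp [sodTime, ih, hk]
    | some s =>
      have hIcc : Icc s T ⊆ Icc 0 T := Icc_subset_Icc_left (sodTime_nonneg hθ hf.1 hk)
      simp only [sodTime, ih, hk, Option.bind_some]
      refine sodNext_convex_combination hθ (hf.1.mono hIcc) (hg.1.mono hIcc) hl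
        (sodNext_eq_of_sodOut_eq hθ hf.1 hg.1 h hk (htime ▸ hk)) (hval s hk) fun t hn => ?_
      exact (sodTime_eq_of_sodOut_eq hθ hf hg h (k + 1)).2 t
        (sodTime_succ_eq_some_iff.2 ⟨s, hk, hn⟩)

end ConvexCombination

theorem stmt16_general (T θ : ℝ) (hθ : 0 < θ) (f g : ℝ → ℝ)
    (hf : memF T f) (hg : memF T g) (h : sodOut T θ f = sodOut T θ g)
    (lam : ℝ) (hl : lam ∈ Set.Icc (0:ℝ) 1) :
    sodOut T θ (fun t => lam * f t + (1 - lam) * g t) = sodOut T θ f := by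
  have htime := sodTime_convex_combination hθ hf hg h hl
  have hcont : ContinuousOn (fun t => lam * f t + (1 - lam) * g t) (Icc 0 T) :=
    (continuousOn_const.mul hf.1).add (continuousOn_const.mul hg.1)
  refine sodOut_congr hθ hcont hf.1 htime fun k s hs => ?_
  have hfg : f s = g s := (sodTime_eq_of_sodOut_eq hθ hf hg h k).2 s (htime k ▸ hs)
  rw [hfg]
  ring

/-- convexity of SOD equivalence classes: if `Φ_θ(f) = Φ_θ(g)` then
`Φ_θ(λf + (1−λ)g) = Φ_θ(f)` for every `λ ∈ [0,1]`. -/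
theorem stmt16 (T θ : ℝ) (hT : 0 < T) (hθ : 0 < θ) (f g : ℝ → ℝ)
    (hf : memF T f) (hg : memF T g) (h : sodOut T θ f = sodOut T θ g)
    (lam : ℝ) (hl : lam ∈ Set.Icc (0:ℝ) 1) :
    sodOut T θ (fun t => lam * f t + (1 - lam) * g t) = sodOut T θ f :=
  stmt16_general T θ hθ f g hf hg h lam hl
end

section
/- Let T = 1 and f : [0,1] → ℝ, f(t) = min{1/2, t}. For a threshold θ > 0 let Γ_θ = {(t_k, v_k) : k ≥ 0} ⊆ ℝ² be the SOD sample graph of f, where t_0 = 0, v_0 = 0 and (t_k, v_k) for k ≥ 1 are the SOD sampling times and event values. Then Γ_θ = {(0,0)} for every θ > 1/2, Γ_{1/2} = {(0,0), (1/2, 1/2)}, and hence d_H(Γ_θ, Γ_{1/2}) = 1/√2 for every θ > 1/2, where d_H is the Hausdorff distance in ℝ² with the Euclidean metric; in particular lim_{θ ↓ 1/2} d_H(Γ_θ, Γ_{1/2}) = 1/√2 ≠ 0 = d_H(Γ_{1/2}, Γ_{1/2}). -/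
open Set Function Filter Classical

/-- A point of the plane with the Euclidean metric. -/
noncomputable def pt (a b : ℝ) : EuclideanSpace ℝ (Fin 2) :=
  (WithLp.equiv 2 (Fin 2 → ℝ)).symm ![a, b]

/-- The SOD sample graph `Γ_θ = {(0,0)} ∪ {(t_k, v_k) : k ≥ 1}` of `f`, as a subset of the
Euclidean plane. -/
noncomputable def sodGraph (T θ : ℝ) (f : ℝ → ℝ) : Set (EuclideanSpace ℝ (Fin 2)) :=
  {x | x = pt 0 0} ∪
  {x | ∃ (k : ℕ) (s : ℝ), 1 ≤ k ∧ sodTime T θ f k = some s ∧ x = pt s (sodOut T θ f s)}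

section Aux

local notation "ff" => (fun t : ℝ => min (1/2 : ℝ) t)

lemma sodNext_zero_hi {θ : ℝ} (hθ : 1/2 < θ) : sodNext 1 θ ff 0 = none := by
  unfold sodNext
  rw [if_neg]
  push_neg
  intro t ht
  have h0 : min (1/2 : ℝ) 0 = 0 := by norm_num
  have h1 : (0:ℝ) ≤ min (1/2 : ℝ) t := le_min (by norm_num) ht.1.le
  calc |min (1/2:ℝ) t - min (1/2:ℝ) 0| = min (1/2:ℝ) t := by
        rw [h0, sub_zero, abs_of_nonneg h1]
    _ ≤ 1/2 := min_le_left _ _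
    _ < θ := hθ

lemma sodTime_hi {θ : ℝ} (hθ : 1/2 < θ) : ∀ k, 1 ≤ k → sodTime 1 θ ff k = none := by
  intro k hk
  induction k with
  | zero => omega
  | succ n ih =>
    show (sodTime 1 θ ff n).bind (sodNext 1 θ ff) = none
    rcases Nat.eq_zero_or_pos n with h | h
    · subst h
      exact sodNext_zero_hi hθ
    · rw [ih h]
      rfl

lemma sodNext_zero_half : sodNext 1 (1/2) ff 0 = some (1/2) := by
  unfold sodNext
  have hmem : ∀ t : ℝ, t ∈ Set.Ioc (0:ℝ) 1 ∧ (1/2:ℝ) ≤ |min (1/2:ℝ) t - min (1/2:ℝ) 0| ↔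
      t ∈ Set.Icc (1/2 : ℝ) 1 := by
    intro t
    have h0 : min (1/2 : ℝ) 0 = 0 := by norm_num
    constructor
    · rintro ⟨⟨ht0, ht1⟩, habs⟩
      refine ⟨?_, ht1⟩
      have h1 : (0:ℝ) ≤ min (1/2 : ℝ) t := le_min (by norm_num) ht0.le
      rw [h0, sub_zero, abs_of_nonneg h1] at habs
      exact le_trans habs (min_le_right _ _)
    · rintro ⟨ht0, ht1⟩
      have : min (1/2:ℝ) t = 1/2 := min_eq_left ht0
      refine ⟨⟨by linarith, ht1⟩, ?_⟩
      rw [h0, sub_zero, this]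
      norm_num [abs_of_nonneg]
  rw [if_pos ⟨1, by norm_num, by norm_num [abs_of_nonneg]⟩]
  congr 1
  have : {t : ℝ | t ∈ Set.Ioc (0:ℝ) 1 ∧ (1/2:ℝ) ≤ |min (1/2:ℝ) t - min (1/2:ℝ) 0|}
      = Set.Icc (1/2 : ℝ) 1 := by
    ext t; exact hmem t
  rw [this, csInf_Icc (by norm_num)]

lemma sodNext_half_half : sodNext 1 (1/2) ff (1/2) = none := by
  unfold sodNext
  rw [if_neg]
  push_neg
  intro t ht
  have : min (1/2:ℝ) t = 1/2 := min_eq_left ht.1.le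
  rw [this]
  norm_num

lemma sodTime_half_one : sodTime 1 (1/2) ff 1 = some (1/2) := by
  exact sodNext_zero_half

lemma sodTime_half_ge2 : ∀ k, 2 ≤ k → sodTime 1 (1/2) ff k = none := by
  intro k hk
  induction k with
  | zero => omega
  | succ n ih =>
    show (sodTime 1 (1/2) ff n).bind (sodNext 1 (1/2) ff) = none
    rcases Nat.lt_or_ge n 2 with h | h
    · have hn : n = 1 := by omega
      subst hn
      rw [sodTime_half_one]
      exact sodNext_half_half
    · rw [ih h]
      rfl

lemma sodTime_half_char : ∀ k s, sodTime 1 (1/2) ff k = some s →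
    (k = 0 ∧ s = 0) ∨ (k = 1 ∧ s = 1/2) := by
  intro k s hks
  match k with
  | 0 => exact Or.inl ⟨rfl, by simpa [sodTime] using hks.symm⟩
  | 1 =>
    rw [sodTime_half_one] at hks
    exact Or.inr ⟨rfl, (Option.some_injective _ hks).symm⟩
  | (n+2) =>
    rw [sodTime_half_ge2 (n+2) (by omega)] at hks
    exact absurd hks (by simp)

lemma sodOut_half_half : sodOut 1 (1/2) ff (1/2) = 1/2 := by
  unfold sodOut
  have h : ∃ k : ℕ, ∃ s : ℝ, sodTime 1 (1/2) ff k = some s ∧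
      sodNext 1 (1/2) ff s = some (1/2) :=
    ⟨0, 0, rfl, sodNext_zero_half⟩
  rw [dif_pos h]
  have hspec := h.choose_spec.choose_spec
  rcases sodTime_half_char _ _ hspec.1 with ⟨_, hs⟩ | ⟨_, hs⟩
  · rw [hs]; norm_num
  · rw [hs] at hspec
    rw [sodNext_half_half] at hspec
    exact absurd hspec.2 (by simp)

lemma sodGraph_hi {θ : ℝ} (hθ : 1/2 < θ) : sodGraph 1 θ ff = {pt 0 0} := by
  ext x
  simp only [sodGraph, Set.mem_union, Set.mem_setOf_eq, Set.mem_singleton_iff]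
  constructor
  · rintro (h | ⟨k, s, hk, hts, hx⟩)
    · exact h
    · rw [sodTime_hi hθ k hk] at hts
      exact absurd hts (by simp)
  · intro h
    exact Or.inl h

lemma sodGraph_half : sodGraph 1 (1/2) ff = {pt 0 0, pt (1/2) (1/2)} := by
  ext x
  simp only [sodGraph, Set.mem_union, Set.mem_setOf_eq, Set.mem_insert_iff,
    Set.mem_singleton_iff]
  constructor
  · rintro (h | ⟨k, s, hk, hts, hx⟩)
    · exact Or.inl h
    · rcases sodTime_half_char k s hts with ⟨hk0, _⟩ | ⟨_, hs⟩
      · omega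
      · subst hs
        rw [sodOut_half_half] at hx
        exact Or.inr hx
  · rintro (h | h)
    · exact Or.inl h
    · refine Or.inr ⟨1, 1/2, le_refl 1, sodTime_half_one, ?_⟩
      rw [sodOut_half_half]
      exact h

lemma dist_pt : dist (pt 0 0) (pt (1/2) (1/2)) = 1/Real.sqrt 2 := by
  have h : dist (pt 0 0) (pt (1/2) (1/2)) = Real.sqrt (∑ i : Fin 2,
      dist ((![0, 0] : Fin 2 → ℝ) i) ((![1/2, 1/2] : Fin 2 → ℝ) i) ^ 2) := by
    rw [EuclideanSpace.dist_eq]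
    rfl
  rw [h, Fin.sum_univ_two]
  simp only [Matrix.cons_val_zero, Matrix.cons_val_one, Matrix.head_cons]
  rw [Real.dist_eq]
  have : |(0:ℝ) - 1/2| = 1/2 := by norm_num
  rw [this]
  rw [show (1/2:ℝ)^2 + (1/2:ℝ)^2 = 1/2 by norm_num]
  rw [one_div, one_div, ← Real.sqrt_inv]

lemma hd_pair {E : Type*} [MetricSpace E] (a b : E) :
    Metric.hausdorffDist ({a} : Set E) {a, b} = dist a b := by
  apply le_antisymm
  · apply Metric.hausdorffDist_le_of_mem_dist dist_nonneg
    · intro x hx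
      rw [Set.mem_singleton_iff] at hx
      exact ⟨a, Set.mem_insert _ _, by rw [hx]; simp [dist_nonneg]⟩
    · intro x hx
      rcases hx with h | h
      · exact ⟨a, rfl, by rw [h]; simp [dist_nonneg]⟩
      · rw [Set.mem_singleton_iff] at h
        exact ⟨a, rfl, by rw [h, dist_comm]⟩
  · have hne : EMetric.hausdorffEdist ({a, b} : Set E) ({a} : Set E) ≠ ⊤ := by
      apply Metric.hausdorffEdist_ne_top_of_nonempty_of_bounded
      · exact ⟨a, Set.mem_insert _ _⟩
      · exact ⟨a, rfl⟩
      · exact (Set.toFinite _).isBounded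
      · exact (Set.toFinite _).isBounded
    have := Metric.infDist_le_hausdorffDist_of_mem
      (Set.mem_insert_of_mem a (Set.mem_singleton b)) hne
    rw [Metric.infDist_singleton, Metric.hausdorffDist_comm, dist_comm] at this
    exact this

end Aux


/-- discontinuity of SOD in the threshold w.r.t. the Hausdorff metric:
for `f(t) = min{1/2, t}` on `[0,1]`, `Γ_θ = {(0,0)}` for `θ > 1/2`,
`Γ_{1/2} = {(0,0), (1/2,1/2)}`, `d_H(Γ_θ, Γ_{1/2}) = 1/√2` for all `θ > 1/2`, hence
`lim_{θ ↓ 1/2} d_H(Γ_θ, Γ_{1/2}) = 1/√2 ≠ 0 = d_H(Γ_{1/2}, Γ_{1/2})`. -/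

theorem stmt18 :
    (∀ θ : ℝ, 1/2 < θ → sodGraph 1 θ (fun t => min (1/2) t) = {pt 0 0}) ∧
    sodGraph 1 (1/2) (fun t => min (1/2) t) = {pt 0 0, pt (1/2) (1/2)} ∧
    (∀ θ : ℝ, 1/2 < θ →
      Metric.hausdorffDist (sodGraph 1 θ (fun t => min (1/2) t))
        (sodGraph 1 (1/2) (fun t => min (1/2) t)) = 1/Real.sqrt 2) ∧
    Tendsto (fun θ : ℝ => Metric.hausdorffDist (sodGraph 1 θ (fun t => min (1/2) t))
        (sodGraph 1 (1/2) (fun t => min (1/2) t)))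
      (nhdsWithin (1/2) (Set.Ioi (1/2))) (nhds (1/Real.sqrt 2)) ∧
    (1/Real.sqrt 2 ≠ 0) ∧
    Metric.hausdorffDist (sodGraph 1 (1/2) (fun t => min (1/2) t))
      (sodGraph 1 (1/2) (fun t => min (1/2) t)) = 0 := by
  have hgraph_half := sodGraph_half
  have hdist : ∀ θ : ℝ, 1/2 < θ →
      Metric.hausdorffDist (sodGraph 1 θ (fun t => min (1/2) t))
        (sodGraph 1 (1/2) (fun t => min (1/2) t)) = 1/Real.sqrt 2 := by
    intro θ hθ
    rw [sodGraph_hi hθ, hgraph_half, hd_pair, dist_pt]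
  refine ⟨fun θ hθ => sodGraph_hi hθ, hgraph_half, hdist, ?_, ?_, Metric.hausdorffDist_self_zero⟩
  · have h := eventually_mem_nhdsWithin (a := (1/2 : ℝ)) (s := Set.Ioi (1/2))
    exact Tendsto.congr' (h.mono fun θ hθ => (hdist θ hθ).symm) tendsto_const_nhds
  · positivity
end
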